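/- arXiv:math/0209270 — 2 statements merged into one kernel-verified Lean document; each statement's English description precedes it below -/
import Mathlib

section
/- (Binomial coefficient asymptotics used in the 0-2 law.) The sequence j ↦ (∑_{r=1}^{j} |C(j, r) − C(j, r−1)|) / 2^j tends to 0 as j → ∞, where C(j, r) denotes the binomial coefficient j choose r and the absolute value is taken in ℤ (or ℝ). -/
/-!
A unimodal sequence has total variation `2 · max − first − last`, so the numerator equals
`2 C(j, ⌊j/2⌋) − 2`. That middle coefficient is at most `C(2n, n) · 2^j / 4^n` with `n = ⌊j/2⌋`,
and `(2n + 1) C(2n, n)² ≤ 16^n` (by induction via `(n + 1) C(2n+2, n+1) = 2(2n+1) C(2n, n)`) gives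
`C(2n, n) / 4^n ≤ 1 / √(2n + 1) → 0`.
-/

open Finset Filter Topology

section UnimodalVariation

variable {α : Type*} [AddCommGroup α] [LinearOrder α] [IsOrderedAddMonoid α] {f : ℕ → α}

theorem sum_Ioc_abs_sub_pred_of_monotoneOn {a b : ℕ} (hab : a ≤ b)
    (hf : MonotoneOn f (Set.Icc a b)) :
    ∑ r ∈ Ioc a b, |f r - f (r - 1)| = f b - f a := by
  induction b, hab using Nat.le_induction with
  | base => simp
  | succ b hab ih =>
    have hstep : f b ≤ f (b + 1) := hf ⟨hab, b.le_succ⟩ ⟨by omega, le_rfl⟩ b.le_succ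
    rw [sum_Ioc_succ_top hab, ih (hf.mono (Set.Icc_subset_Icc_right b.le_succ)), Nat.add_sub_cancel,
      abs_of_nonneg (sub_nonneg.2 hstep)]
    abel

theorem sum_Ioc_abs_sub_pred_of_antitoneOn {a b : ℕ} (hab : a ≤ b)
    (hf : AntitoneOn f (Set.Icc a b)) :
    ∑ r ∈ Ioc a b, |f r - f (r - 1)| = f a - f b := by
  calc ∑ r ∈ Ioc a b, |f r - f (r - 1)| = ∑ r ∈ Ioc a b, |-f r - -f (r - 1)| :=
        sum_congr rfl fun r _ => by rw [neg_sub_neg, abs_sub_comm]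
    _ = f a - f b := by rw [sum_Ioc_abs_sub_pred_of_monotoneOn hab hf.neg, neg_sub_neg]

theorem sum_Icc_abs_sub_pred_of_unimodal {m n : ℕ} (hmn : m ≤ n) (hmono : MonotoneOn f (Set.Iic m))
    (hanti : AntitoneOn f (Set.Ici m)) :
    ∑ r ∈ Icc 1 n, |f r - f (r - 1)| = 2 • f m - f 0 - f n := by
  rw [show Icc 1 n = Ioc 0 n from Icc_add_one_left_eq_Ioc 0 n, ← Ioc_union_Ioc_eq_Ioc m.zero_le hmn,
    sum_union (Ioc_disjoint_Ioc_of_le le_rfl),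
    sum_Ioc_abs_sub_pred_of_monotoneOn m.zero_le (hmono.mono Set.Icc_subset_Iic_self),
    sum_Ioc_abs_sub_pred_of_antitoneOn hmn (hanti.mono Set.Icc_subset_Ici_self)]
  abel

end UnimodalVariation

namespace Nat

theorem monotoneOn_choose_Iic_half (n : ℕ) : MonotoneOn n.choose (Set.Iic (n / 2)) :=
  monotoneOn_of_le_add_one Set.ordConnected_Iic fun _ _ _ hk1 =>
    choose_le_succ_of_lt_half_left (Set.mem_Iic.1 hk1)

theorem antitoneOn_choose_Ici_half (n : ℕ) : AntitoneOn n.choose (Set.Ici (n / 2)) := by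
  refine antitoneOn_of_add_one_le Set.ordConnected_Ici fun k _ hk _ => ?_
  have hk : n / 2 ≤ k := hk
  refine Nat.le_of_mul_le_mul_right ?_ k.succ_pos
  rw [choose_succ_right_eq]
  exact Nat.mul_le_mul_left _ (by omega)

theorem sum_abs_choose_sub_choose_pred (n : ℕ) :
    ∑ r ∈ Finset.Icc 1 n, |(n.choose r : ℝ) - n.choose (r - 1)| = 2 * n.choose (n / 2) - 2 := by
  rw [sum_Icc_abs_sub_pred_of_unimodal (f := fun r => (n.choose r : ℝ)) (n.div_le_self 2)
      (Nat.mono_cast.comp_monotoneOn (monotoneOn_choose_Iic_half n))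
      (Nat.mono_cast.comp_antitoneOn (antitoneOn_choose_Ici_half n))]
  simp only [choose_zero_right, choose_self, cast_one, nsmul_eq_mul, cast_ofNat]
  ring

theorem choose_half_mul_four_pow_le (n : ℕ) :
    n.choose (n / 2) * 4 ^ (n / 2) ≤ centralBinom (n / 2) * 2 ^ n := by
  obtain ⟨k, rfl | rfl⟩ := n.even_or_odd'
  · rw [show 2 * k / 2 = k by omega, ← centralBinom_eq_two_mul_choose, pow_mul]
    norm_num
  · have hodd : (2 * k + 1).choose k ≤ 2 * centralBinom k := by
      rw [← choose_symm_half, choose_succ_succ', ← centralBinom_eq_two_mul_choose]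
      linarith [choose_le_centralBinom (k + 1) k]
    rw [show (2 * k + 1) / 2 = k by omega, pow_succ, pow_mul]
    norm_num
    nlinarith [pow_pos (by norm_num : 0 < 4) k]

theorem two_mul_add_one_mul_centralBinom_sq_le (n : ℕ) :
    (2 * n + 1) * centralBinom n ^ 2 ≤ 16 ^ n := by
  induction n with
  | zero => simp
  | succ n ih =>
    refine Nat.le_of_mul_le_mul_left ?_ (pow_pos n.succ_pos 2)
    calc (n + 1) ^ 2 * ((2 * (n + 1) + 1) * centralBinom (n + 1) ^ 2)
        = (2 * n + 3) * ((n + 1) * centralBinom (n + 1)) ^ 2 := by ring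
      _ = 4 * ((2 * n + 1) * (2 * n + 3)) * ((2 * n + 1) * centralBinom n ^ 2) := by
        rw [succ_mul_centralBinom_succ]; ring
      _ ≤ 4 * (4 * (n + 1) ^ 2) * 16 ^ n := Nat.mul_le_mul (by nlinarith) ih
      _ = (n + 1) ^ 2 * 16 ^ (n + 1) := by ring

theorem tendsto_centralBinom_div_four_pow :
    Tendsto (fun n : ℕ => (n.centralBinom : ℝ) / 4 ^ n) atTop (𝓝 0) := by
  have hsq : Tendsto (fun n : ℕ => ((n.centralBinom : ℝ) / 4 ^ n) ^ 2) atTop (𝓝 0) := by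
    refine squeeze_zero (fun n => by positivity) (fun n => ?_)
      tendsto_one_div_add_atTop_nhds_zero_nat
    rw [div_pow, ← pow_mul, show (4 : ℝ) ^ (n * 2) = 16 ^ n by rw [pow_mul']; norm_num,
      div_le_div_iff₀ (by positivity) (by positivity)]
    have hn : ((2 * n + 1) * n.centralBinom ^ 2 : ℝ) ≤ 16 ^ n := by
      exact_mod_cast two_mul_add_one_mul_centralBinom_sq_le n
    nlinarith [sq_nonneg (n.centralBinom : ℝ)]
  have hsqrt := hsq.sqrt
  rw [Real.sqrt_zero] at hsqrt
  exact hsqrt.congr fun n => Real.sqrt_sq (by positivity)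

end Nat

/-- Binomial coefficient asymptotics used in the 0-2 law:
`(∑_{r=1}^{j} |C(j,r) − C(j,r−1)|) / 2^j → 0` as `j → ∞`. -/
theorem binomial_variation_tendsto_zero :
    Filter.Tendsto
      (fun j : ℕ => (∑ r ∈ Finset.Icc 1 j, |(j.choose r : ℝ) - (j.choose (r - 1) : ℝ)|) / 2 ^ j)
      Filter.atTop (nhds 0) := by
  have hbound (j : ℕ) : (∑ r ∈ Icc 1 j, |(j.choose r : ℝ) - (j.choose (r - 1) : ℝ)|) / 2 ^ j ≤
      2 * ((j / 2).centralBinom / 4 ^ (j / 2)) := by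
    have hmid : (j.choose (j / 2) * 4 ^ (j / 2) : ℝ) ≤ (j / 2).centralBinom * 2 ^ j := by
      exact_mod_cast Nat.choose_half_mul_four_pow_le j
    rw [Nat.sum_abs_choose_sub_choose_pred, mul_div_assoc',
      div_le_div_iff₀ (by positivity) (by positivity)]
    nlinarith [pow_pos (four_pos (α := ℝ)) (j / 2)]
  refine squeeze_zero (fun j => by positivity) hbound ?_
  simpa using (Nat.tendsto_centralBinom_div_four_pow.comp
    (Nat.tendsto_div_const_atTop two_ne_zero)).const_mul 2
end

section
/- (Lemma 2.9: potentials and superharmonic elements.) In the matrix-product setting: (i) if x ≥ 0 lies in D(G), then G x ∈ D(P) and P(G x) = G x − x; in particular every potential is superharmonic. (ii) A superharmonic element x (note that all iterates Pⁿ x are then defined, since P x ≤ x) is a potential if and only if Pⁿ x → 0 in the product topology of M; in particular any superharmonic element which is majorized by a potential is itself a potential. -/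
open Filter Topology
open scoped Classical ComplexOrder

namespace MartinMP

variable {I : Type*} {n : I → ℕ}

/-- The product `M = ∏ s, Matrix (Fin (n s)) (Fin (n s)) ℂ` of matrix algebras. -/
abbrev MP (I : Type*) (n : I → ℕ) := ∀ s : I, Matrix (Fin (n s)) (Fin (n s)) ℂ

/-- The order on `M`: `x ≤ y` iff `(y − x) s` is positive semidefinite for every `s`. -/
def MPle (x y : MP I n) : Prop := ∀ s : I, ((y - x) s).PosSemidef

/-- `0 ≤ x`: every component of `x` is positive semidefinite. -/
def MPos (x : MP I n) : Prop := ∀ s : I, (x s).PosSemidef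

/-- The projection `F_Y` killing all coordinates outside the finite set `Y`. -/
noncomputable def FY (Y : Finset I) (x : MP I n) : MP I n := fun s => if s ∈ Y then x s else 0

/-- `x` is finitely supported. -/
def FinSupp (x : MP I n) : Prop := ∃ Y : Finset I, FY Y x = x

variable (P₀ : MP I n → MP I n)

/-- `x ∈ D(P)`: `x ≥ 0` and the net `(P₀ (F_Y x))_Y` (over finite `Y ⊆ I` ordered by
inclusion) converges in the product topology. -/
def InDP (x : MP I n) : Prop :=
  MPos x ∧ ∃ L : MP I n, Tendsto (fun Y : Finset I => P₀ (FY Y x)) atTop (nhds L)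

/-- The extension `P` of `P₀`: `P x := lim_Y P₀ (F_Y x)` when the limit exists (`0` otherwise). -/
noncomputable def Papp (x : MP I n) : MP I n :=
  if h : ∃ L : MP I n, Tendsto (fun Y : Finset I => P₀ (FY Y x)) atTop (nhds L)
  then h.choose else 0

/-- `x ∈ D(G)`: all iterates `Pᵏ x` are defined and the series `∑ₖ Pᵏ x` converges. -/
def InDG (x : MP I n) : Prop :=
  (∀ k : ℕ, InDP P₀ ((Papp P₀)^[k] x)) ∧
  ∃ L : MP I n,
    Tendsto (fun N : ℕ => ∑ k ∈ Finset.range N, (Papp P₀)^[k] x) atTop (nhds L)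

/-- The potential `G x = ∑ₖ Pᵏ x` (junk value `0` if the series does not converge). -/
noncomputable def Gval (x : MP I n) : MP I n :=
  if h : ∃ L : MP I n,
      Tendsto (fun N : ℕ => ∑ k ∈ Finset.range N, (Papp P₀)^[k] x) atTop (nhds L)
  then h.choose else 0

/-- `x` is superharmonic: `x ≥ 0`, `x ∈ D(P)` and `P x ≤ x`. -/
def Superharmonic (x : MP I n) : Prop := InDP P₀ x ∧ MPle (Papp P₀ x) x

/-- `x` is a potential: `x = G y` for some `y ∈ D(G)`. -/
def IsPotential (x : MP I n) : Prop := ∃ y : MP I n, InDG P₀ y ∧ x = Gval P₀ y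

/-- One step of the operator `(id − F_Y) ∘ P`. -/
noncomputable def QY (Y : Finset I) (z : MP I n) : MP I n :=
  Papp P₀ z - FY Y (Papp P₀ z)

/-!
In the Loewner order every factor of `M` is a finite-dimensional C⋆-algebra, so the order is
closed and its order intervals are compact; by Tychonoff the same holds on `M`, hence bounded
monotone nets in `M` converge. This makes `D(P)` hereditary (`0 ≤ y ≤ x ∈ D(P)` gives `y ∈ D(P)`
and `P y ≤ P x`), and `P` additive on it.

For (i), the partial sums `S N` of `G x` satisfy `P (S N) = S (N + 1) - x ≤ G x - x`. Since
`z ↦ P₀ (F_Y z)` is a linear function of the finitely many coordinates in `Y`, hence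
continuous, `P₀ (F_Y (G x)) ≤ G x - x` for all `Y`, so `G x ∈ D(P)` and `P (G x) ≤ G x - x`;
monotonicity of `P` gives the reverse inequality. Then `Pᵏ (G x) = G x - S k → 0`.

For (ii), if `x` is superharmonic then `Pᵏ (x - P x) = Pᵏ x - Pᵏ⁺¹ x` telescopes, so
`x = G (x - P x)` as soon as `Pᵏ x → 0`. If moreover `x ≤ G y`, the decreasing sequence `Pᵏ x`
converges, and its limit lies between `0` and `lim Pᵏ (G y) = 0`.
-/

end MartinMP

open scoped MatrixOrder

namespace Matrix

variable {ι : Type*} [Fintype ι]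

instance : OrderClosedTopology (Matrix ι ι ℂ) := by
  open scoped Matrix.Norms.L2Operator in exact inferInstance

instance : CompactIccSpace (Matrix ι ι ℂ) where
  isCompact_Icc {a b} := by
    open scoped Matrix.Norms.L2Operator in
    refine (isCompact_closedBall a ‖b - a‖).of_isClosed_subset isClosed_Icc ?_
    rintro x ⟨hax, hxb⟩
    rw [Metric.mem_closedBall, dist_eq_norm]
    exact CStarAlgebra.norm_le_norm_of_nonneg_of_le (sub_nonneg.2 hax) (sub_le_sub_right hxb a)

end Matrix

section MonotoneConvergence

variable {ι α : Type*} [SemilatticeSup ι] [Nonempty ι] [PartialOrder α] [TopologicalSpace α]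
  [OrderClosedTopology α] [CompactIccSpace α] {f : ι → α}

theorem Monotone.exists_tendsto_atTop_of_le (hf : Monotone f) {b : α} (hb : ∀ i, f i ≤ b) :
    ∃ a, Tendsto f atTop (𝓝 a) := by
  obtain ⟨i₀⟩ := ‹Nonempty ι›
  have hmem : ∀ᶠ i in atTop, f i ∈ Set.Icc (f i₀) b :=
    (eventually_ge_atTop i₀).mono fun i hi => ⟨hf hi, hb i⟩
  obtain ⟨a, -, ha⟩ := isCompact_Icc.exists_mapClusterPt (le_principal_iff.2 hmem)
  -- every cluster point is the supremum of the range, so there is only one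
  have hlub : ∀ c, MapClusterPt c atTop f → IsLUB (Set.range f) c := fun c hc =>
    ⟨Set.forall_mem_range.2 fun i =>
        isClosed_Ici.mem_of_mapClusterPt hc ((eventually_ge_atTop i).mono fun _ hj => hf hj),
      fun _ hu => isClosed_Iic.mem_of_mapClusterPt hc (.of_forall fun j => hu ⟨j, rfl⟩)⟩
  exact ⟨a, isCompact_Icc.tendsto_nhds_of_unique_mapClusterPt hmem
    fun c _ hc => (hlub c hc).unique (hlub a ha)⟩

theorem Antitone.exists_tendsto_atTop_of_ge (hf : Antitone f) {b : α} (hb : ∀ i, b ≤ f i) :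
    ∃ a, Tendsto f atTop (𝓝 a) :=
  Monotone.exists_tendsto_atTop_of_le (α := αᵒᵈ) hf.dual_right hb

end MonotoneConvergence

namespace MartinMP

variable {I : Type*} {n : I → ℕ}

theorem mple_iff_le {x y : MP I n} : MPle x y ↔ x ≤ y := Iff.rfl

theorem mpos_iff_nonneg {x : MP I n} : MPos x ↔ 0 ≤ x :=
  forall_congr' fun s => by rw [← Matrix.nonneg_iff_posSemidef]; rfl

theorem FY_add (Y : Finset I) (x y : MP I n) : FY Y (x + y) = FY Y x + FY Y y := by
  funext s; by_cases hs : s ∈ Y <;> simp [FY, hs]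

theorem FY_empty (x : MP I n) : FY ∅ x = 0 := by
  funext s; simp [FY]

theorem FY_insert {a : I} {Y : Finset I} (ha : a ∉ Y) (x : MP I n) :
    FY (insert a Y) x = FY Y x + Pi.single a (x a) := by
  funext s
  by_cases hs : s = a
  · subst hs; simp [FY, ha]
  · simp [FY, hs]

theorem FY_FY_of_subset {Y Y' : Finset I} (h : Y ⊆ Y') (x : MP I n) :
    FY Y' (FY Y x) = FY Y x := by
  funext s
  by_cases hs : s ∈ Y
  · simp [FY, hs, h hs]
  · simp [FY, hs]

theorem finSupp_FY (Y : Finset I) (x : MP I n) : FinSupp (FY Y x) :=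
  ⟨Y, FY_FY_of_subset subset_rfl x⟩

theorem finSupp_single (s : I) (A : Matrix (Fin (n s)) (Fin (n s)) ℂ) :
    FinSupp (Pi.single s A : MP I n) :=
  ⟨{s}, by rw [← insert_empty_eq s, FY_insert (Finset.notMem_empty s), FY_empty, zero_add,
    Pi.single_eq_same]⟩

theorem FY_nonneg {x : MP I n} (hx : 0 ≤ x) (Y : Finset I) : 0 ≤ FY Y x := fun s => by
  unfold FY; split_ifs
  exacts [hx s, le_rfl]

theorem FY_le_self {x : MP I n} (hx : 0 ≤ x) (Y : Finset I) : FY Y x ≤ x := fun s => by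
  unfold FY; split_ifs
  exacts [le_rfl, hx s]

def AdditiveOnFinSupp (P₀ : MP I n → MP I n) : Prop :=
  ∀ x y : MP I n, FinSupp x → FinSupp y → P₀ (x + y) = P₀ x + P₀ y

def HomogeneousOnFinSupp (P₀ : MP I n → MP I n) : Prop :=
  ∀ (c : ℂ) (x : MP I n), FinSupp x → P₀ (c • x) = c • P₀ x

def PositiveOnFinSupp (P₀ : MP I n → MP I n) : Prop :=
  ∀ x : MP I n, FinSupp x → 0 ≤ x → 0 ≤ P₀ x

variable {P₀ : MP I n → MP I n}

theorem P₀_FY_add (hadd : AdditiveOnFinSupp P₀) (Y : Finset I) (x y : MP I n) :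
    P₀ (FY Y (x + y)) = P₀ (FY Y x) + P₀ (FY Y y) := by
  rw [FY_add]; exact hadd _ _ (finSupp_FY Y x) (finSupp_FY Y y)

theorem P₀_FY_zero (hadd : AdditiveOnFinSupp P₀) (Y : Finset I) : P₀ (FY Y (0 : MP I n)) = 0 := by
  simpa using P₀_FY_add hadd Y 0 0

theorem monotone_P₀_FY (hadd : AdditiveOnFinSupp P₀) (hpos : PositiveOnFinSupp P₀) (Y : Finset I) :
    Monotone fun x => P₀ (FY Y x) := fun x y hxy => by
  show P₀ (FY Y x) ≤ P₀ (FY Y y)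
  rw [← add_sub_cancel x y, P₀_FY_add hadd]
  exact le_add_of_nonneg_right (hpos _ (finSupp_FY _ _) (FY_nonneg (sub_nonneg.2 hxy) Y))

theorem monotone_P₀_FY_of_nonneg (hadd : AdditiveOnFinSupp P₀) (hpos : PositiveOnFinSupp P₀)
    {x : MP I n} (hx : 0 ≤ x) : Monotone fun Y : Finset I => P₀ (FY Y x) := fun Y Y' h => by
  simpa only [FY_FY_of_subset h] using monotone_P₀_FY hadd hpos Y' (FY_le_self hx Y)

theorem continuous_P₀_single (hadd : AdditiveOnFinSupp P₀)
    (hsmul : HomogeneousOnFinSupp P₀) (s : I) :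
    Continuous fun A : Matrix (Fin (n s)) (Fin (n s)) ℂ => P₀ (Pi.single s A) :=
  let L : Matrix (Fin (n s)) (Fin (n s)) ℂ →ₗ[ℂ] MP I n :=
    { toFun := fun A => P₀ (Pi.single s A)
      map_add' := fun A B => by
        rw [Pi.single_add]; exact hadd _ _ (finSupp_single s A) (finSupp_single s B)
      map_smul' := fun c A => by
        rw [Pi.single_smul]; exact hsmul c _ (finSupp_single s A) }
  L.continuous_of_finiteDimensional

theorem continuous_P₀_FY (hadd : AdditiveOnFinSupp P₀)
    (hsmul : HomogeneousOnFinSupp P₀) (Y : Finset I) :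
    Continuous fun z => P₀ (FY Y z) := by
  induction Y using Finset.induction_on with
  | empty => simpa [FY_empty] using continuous_const (y := P₀ 0)
  | insert a Y ha ih =>
    simp_rw [FY_insert ha, hadd _ _ (finSupp_FY _ _) (finSupp_single _ _)]
    exact ih.add ((continuous_P₀_single hadd hsmul a).comp (continuous_apply a))

theorem inDP_iff {x : MP I n} :
    InDP P₀ x ↔ 0 ≤ x ∧ ∃ L, Tendsto (fun Y : Finset I => P₀ (FY Y x)) atTop (𝓝 L) := by
  rw [InDP, mpos_iff_nonneg]

theorem tendsto_Papp {x : MP I n} (hx : InDP P₀ x) :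
    Tendsto (fun Y : Finset I => P₀ (FY Y x)) atTop (𝓝 (Papp P₀ x)) := by
  rw [Papp, dif_pos hx.2]
  exact hx.2.choose_spec

theorem Papp_eq_of_tendsto {x L : MP I n}
    (h : Tendsto (fun Y : Finset I => P₀ (FY Y x)) atTop (𝓝 L)) : Papp P₀ x = L := by
  have hex : ∃ L, Tendsto (fun Y : Finset I => P₀ (FY Y x)) atTop (𝓝 L) := ⟨L, h⟩
  rw [Papp, dif_pos hex]
  exact tendsto_nhds_unique hex.choose_spec h

theorem InDP.nonneg {x : MP I n} (hx : InDP P₀ x) : 0 ≤ x :=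
  (inDP_iff.1 hx).1

theorem P₀_FY_le_Papp (hadd : AdditiveOnFinSupp P₀) (hpos : PositiveOnFinSupp P₀) {x : MP I n}
    (hx : InDP P₀ x) (Y : Finset I) : P₀ (FY Y x) ≤ Papp P₀ x :=
  (monotone_P₀_FY_of_nonneg hadd hpos hx.nonneg).ge_of_tendsto (tendsto_Papp hx) Y

theorem Papp_nonneg (hpos : PositiveOnFinSupp P₀) {x : MP I n} (hx : InDP P₀ x) :
    0 ≤ Papp P₀ x :=
  ge_of_tendsto' (tendsto_Papp hx) fun Y => hpos _ (finSupp_FY Y x) (FY_nonneg hx.nonneg Y)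

theorem inDP_and_Papp_le_of_forall_le (hadd : AdditiveOnFinSupp P₀)
    (hpos : PositiveOnFinSupp P₀) {x b : MP I n} (hx : 0 ≤ x)
    (hb : ∀ Y : Finset I, P₀ (FY Y x) ≤ b) : InDP P₀ x ∧ Papp P₀ x ≤ b := by
  obtain ⟨L, hL⟩ := (monotone_P₀_FY_of_nonneg hadd hpos hx).exists_tendsto_atTop_of_le hb
  exact ⟨inDP_iff.2 ⟨hx, L, hL⟩, Papp_eq_of_tendsto hL ▸ le_of_tendsto' hL hb⟩

theorem inDP_and_Papp_le_of_le (hadd : AdditiveOnFinSupp P₀) (hpos : PositiveOnFinSupp P₀)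
    {x y : MP I n} (hy : 0 ≤ y) (hyx : y ≤ x) (hx : InDP P₀ x) :
    InDP P₀ y ∧ Papp P₀ y ≤ Papp P₀ x :=
  inDP_and_Papp_le_of_forall_le hadd hpos hy fun Y =>
    (monotone_P₀_FY hadd hpos Y hyx).trans (P₀_FY_le_Papp hadd hpos hx Y)

theorem tendsto_Papp_add (hadd : AdditiveOnFinSupp P₀) {x y : MP I n} (hx : InDP P₀ x)
    (hy : InDP P₀ y) :
    Tendsto (fun Y : Finset I => P₀ (FY Y (x + y))) atTop (𝓝 (Papp P₀ x + Papp P₀ y)) := by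
  simpa only [P₀_FY_add hadd] using (tendsto_Papp hx).add (tendsto_Papp hy)

theorem InDP.add (hadd : AdditiveOnFinSupp P₀) {x y : MP I n} (hx : InDP P₀ x)
    (hy : InDP P₀ y) : InDP P₀ (x + y) :=
  inDP_iff.2 ⟨add_nonneg hx.nonneg hy.nonneg, _, tendsto_Papp_add hadd hx hy⟩

theorem Papp_add (hadd : AdditiveOnFinSupp P₀) {x y : MP I n} (hx : InDP P₀ x)
    (hy : InDP P₀ y) : Papp P₀ (x + y) = Papp P₀ x + Papp P₀ y :=
  Papp_eq_of_tendsto (tendsto_Papp_add hadd hx hy)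

theorem inDP_sub_and_Papp_sub (hadd : AdditiveOnFinSupp P₀) (hpos : PositiveOnFinSupp P₀)
    {x y : MP I n} (hx : InDP P₀ x) (hy : InDP P₀ y) (hyx : y ≤ x) :
    InDP P₀ (x - y) ∧ Papp P₀ (x - y) = Papp P₀ x - Papp P₀ y := by
  have hxy : InDP P₀ (x - y) :=
    (inDP_and_Papp_le_of_le hadd hpos (sub_nonneg.2 hyx) (sub_le_self x hy.nonneg) hx).1
  refine ⟨hxy, eq_sub_of_add_eq ?_⟩
  rw [← Papp_add hadd hxy hy, sub_add_cancel]

theorem inDP_zero (hadd : AdditiveOnFinSupp P₀) : InDP P₀ (0 : MP I n) :=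
  inDP_iff.2 ⟨le_rfl, 0, by simp only [P₀_FY_zero hadd, tendsto_const_nhds]⟩

theorem Papp_zero (hadd : AdditiveOnFinSupp P₀) : Papp P₀ (0 : MP I n) = 0 :=
  Papp_eq_of_tendsto (by simp only [P₀_FY_zero hadd, tendsto_const_nhds])

theorem InDP.sum_range (hadd : AdditiveOnFinSupp P₀) {f : ℕ → MP I n}
    (hf : ∀ k, InDP P₀ (f k)) (N : ℕ) : InDP P₀ (∑ k ∈ Finset.range N, f k) :=
  Finset.sum_induction _ (InDP P₀) (fun _ _ => InDP.add hadd) (inDP_zero hadd) fun k _ => hf k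

theorem Papp_sum_range (hadd : AdditiveOnFinSupp P₀) {f : ℕ → MP I n}
    (hf : ∀ k, InDP P₀ (f k)) (N : ℕ) :
    Papp P₀ (∑ k ∈ Finset.range N, f k) = ∑ k ∈ Finset.range N, Papp P₀ (f k) := by
  induction N with
  | zero => simpa using Papp_zero hadd
  | succ N ih =>
    rw [Finset.sum_range_succ, Finset.sum_range_succ,
      Papp_add hadd (InDP.sum_range hadd hf N) (hf N), ih]

theorem tendsto_Gval {x : MP I n} (hx : InDG P₀ x) :
    Tendsto (fun N => ∑ k ∈ Finset.range N, (Papp P₀)^[k] x) atTop (𝓝 (Gval P₀ x)) := by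
  rw [Gval, dif_pos hx.2]
  exact hx.2.choose_spec

theorem Gval_eq_of_tendsto {x L : MP I n}
    (h : Tendsto (fun N => ∑ k ∈ Finset.range N, (Papp P₀)^[k] x) atTop (𝓝 L)) :
    Gval P₀ x = L := by
  have hex : ∃ L, Tendsto (fun N => ∑ k ∈ Finset.range N, (Papp P₀)^[k] x) atTop (𝓝 L) :=
    ⟨L, h⟩
  rw [Gval, dif_pos hex]
  exact tendsto_nhds_unique hex.choose_spec h

theorem InDG.sum_range_le_Gval {x : MP I n} (hx : InDG P₀ x) (N : ℕ) :
    ∑ k ∈ Finset.range N, (Papp P₀)^[k] x ≤ Gval P₀ x :=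
  Monotone.ge_of_tendsto (fun _ _ h => Finset.sum_le_sum_of_subset_of_nonneg
    (Finset.range_mono h) fun k _ _ => (hx.1 k).nonneg) (tendsto_Gval hx) N

theorem InDG.Gval_nonneg {x : MP I n} (hx : InDG P₀ x) : 0 ≤ Gval P₀ x :=
  ge_of_tendsto' (tendsto_Gval hx) fun _ => Finset.sum_nonneg fun k _ => (hx.1 k).nonneg

theorem Papp_sum_range_iterate (hadd : AdditiveOnFinSupp P₀) {x : MP I n}
    (hx : ∀ k, InDP P₀ ((Papp P₀)^[k] x)) (N : ℕ) :
    Papp P₀ (∑ k ∈ Finset.range N, (Papp P₀)^[k] x)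
      = ∑ k ∈ Finset.range (N + 1), (Papp P₀)^[k] x - x := by
  rw [Papp_sum_range hadd hx, Finset.sum_range_succ', Function.iterate_zero_apply,
    add_sub_cancel_right]
  simp only [Function.iterate_succ_apply']

theorem InDG.inDP_Gval_and_Papp_le (hadd : AdditiveOnFinSupp P₀)
    (hsmul : HomogeneousOnFinSupp P₀)
    (hpos : PositiveOnFinSupp P₀) {x : MP I n} (hx : InDG P₀ x) :
    InDP P₀ (Gval P₀ x) ∧ Papp P₀ (Gval P₀ x) ≤ Gval P₀ x - x :=
  inDP_and_Papp_le_of_forall_le hadd hpos hx.Gval_nonneg fun Y =>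
    le_of_tendsto' (((continuous_P₀_FY hadd hsmul Y).tendsto _).comp (tendsto_Gval hx)) fun N =>
      calc P₀ (FY Y (∑ k ∈ Finset.range N, (Papp P₀)^[k] x))
          ≤ Papp P₀ (∑ k ∈ Finset.range N, (Papp P₀)^[k] x) :=
            P₀_FY_le_Papp hadd hpos (InDP.sum_range hadd hx.1 N) Y
        _ = ∑ k ∈ Finset.range (N + 1), (Papp P₀)^[k] x - x := Papp_sum_range_iterate hadd hx.1 N
        _ ≤ Gval P₀ x - x := sub_le_sub_right (hx.sum_range_le_Gval _) x

theorem InDG.Papp_Gval (hadd : AdditiveOnFinSupp P₀)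
    (hsmul : HomogeneousOnFinSupp P₀)
    (hpos : PositiveOnFinSupp P₀) {x : MP I n} (hx : InDG P₀ x) :
    Papp P₀ (Gval P₀ x) = Gval P₀ x - x := by
  obtain ⟨hG, hle⟩ := hx.inDP_Gval_and_Papp_le hadd hsmul hpos
  refine le_antisymm hle (le_of_tendsto'
    (((tendsto_Gval hx).comp (tendsto_add_atTop_nat 1)).sub_const x) fun N => ?_)
  rw [Function.comp_apply, ← Papp_sum_range_iterate hadd hx.1 N]
  exact (inDP_and_Papp_le_of_le hadd hpos (InDP.sum_range hadd hx.1 N).nonneg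
    (hx.sum_range_le_Gval N) hG).2

theorem InDG.iterate_Papp_Gval (hadd : AdditiveOnFinSupp P₀)
    (hsmul : HomogeneousOnFinSupp P₀)
    (hpos : PositiveOnFinSupp P₀) {x : MP I n} (hx : InDG P₀ x) (k : ℕ) :
    (Papp P₀)^[k] (Gval P₀ x) = Gval P₀ x - ∑ j ∈ Finset.range k, (Papp P₀)^[j] x := by
  induction k with
  | zero => simp
  | succ k ih =>
    rw [Function.iterate_succ_apply', ih,
      (inDP_sub_and_Papp_sub hadd hpos (hx.inDP_Gval_and_Papp_le hadd hsmul hpos).1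
        (InDP.sum_range hadd hx.1 k) (hx.sum_range_le_Gval k)).2,
      hx.Papp_Gval hadd hsmul hpos, Papp_sum_range_iterate hadd hx.1 k, sub_sub_sub_cancel_right]

theorem IsPotential.superharmonic (hadd : AdditiveOnFinSupp P₀)
    (hsmul : HomogeneousOnFinSupp P₀)
    (hpos : PositiveOnFinSupp P₀) {x : MP I n} (hx : IsPotential P₀ x) :
    Superharmonic P₀ x := by
  obtain ⟨y, hy, rfl⟩ := hx
  refine ⟨(hy.inDP_Gval_and_Papp_le hadd hsmul hpos).1, ?_⟩
  rw [mple_iff_le, hy.Papp_Gval hadd hsmul hpos]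
  exact sub_le_self _ (hy.1 0).nonneg

theorem IsPotential.tendsto_iterate (hadd : AdditiveOnFinSupp P₀)
    (hsmul : HomogeneousOnFinSupp P₀)
    (hpos : PositiveOnFinSupp P₀) {x : MP I n} (hx : IsPotential P₀ x) :
    Tendsto (fun k => (Papp P₀)^[k] x) atTop (𝓝 0) := by
  obtain ⟨y, hy, rfl⟩ := hx
  simpa only [hy.iterate_Papp_Gval hadd hsmul hpos, sub_self] using
    (tendsto_const_nhds (x := Gval P₀ y)).sub (tendsto_Gval hy)

theorem Superharmonic.superharmonic_Papp (hadd : AdditiveOnFinSupp P₀)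
    (hpos : PositiveOnFinSupp P₀) {x : MP I n} (hx : Superharmonic P₀ x) :
    Superharmonic P₀ (Papp P₀ x) :=
  inDP_and_Papp_le_of_le hadd hpos (Papp_nonneg hpos hx.1) hx.2 hx.1

theorem Superharmonic.iterate (hadd : AdditiveOnFinSupp P₀) (hpos : PositiveOnFinSupp P₀)
    {x : MP I n} (hx : Superharmonic P₀ x) (k : ℕ) : Superharmonic P₀ ((Papp P₀)^[k] x) := by
  induction k with
  | zero => exact hx
  | succ k ih =>
    rw [Function.iterate_succ_apply']
    exact ih.superharmonic_Papp hadd hpos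

theorem Superharmonic.iterate_succ_le (hadd : AdditiveOnFinSupp P₀)
    (hpos : PositiveOnFinSupp P₀) {x : MP I n} (hx : Superharmonic P₀ x) (k : ℕ) :
    (Papp P₀)^[k + 1] x ≤ (Papp P₀)^[k] x := by
  rw [Function.iterate_succ_apply']
  exact (hx.iterate hadd hpos k).2

theorem Superharmonic.iterate_Papp_sub (hadd : AdditiveOnFinSupp P₀)
    (hpos : PositiveOnFinSupp P₀) {x : MP I n} (hx : Superharmonic P₀ x) (k : ℕ) :
    (Papp P₀)^[k] (x - Papp P₀ x) = (Papp P₀)^[k] x - (Papp P₀)^[k + 1] x := by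
  induction k with
  | zero => rfl
  | succ k ih =>
    rw [Function.iterate_succ_apply', ih, (inDP_sub_and_Papp_sub hadd hpos
      (hx.iterate hadd hpos k).1 (hx.iterate hadd hpos (k + 1)).1
      (hx.iterate_succ_le hadd hpos k)).2]
    simp only [Function.iterate_succ_apply']

theorem Superharmonic.isPotential_of_tendsto (hadd : AdditiveOnFinSupp P₀)
    (hpos : PositiveOnFinSupp P₀) {x : MP I n} (hx : Superharmonic P₀ x)
    (h : Tendsto (fun k => (Papp P₀)^[k] x) atTop (𝓝 0)) : IsPotential P₀ x := by
  have hsum : ∀ N, ∑ k ∈ Finset.range N, (Papp P₀)^[k] (x - Papp P₀ x)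
      = x - (Papp P₀)^[N] x := fun N => by
    simp only [hx.iterate_Papp_sub hadd hpos]
    exact Finset.sum_range_sub' _ N
  have hconv : Tendsto (fun N => ∑ k ∈ Finset.range N, (Papp P₀)^[k] (x - Papp P₀ x)) atTop
      (𝓝 x) := by
    simpa only [hsum, sub_zero] using (tendsto_const_nhds (x := x)).sub h
  refine ⟨x - Papp P₀ x, ⟨fun k => ?_, x, hconv⟩, (Gval_eq_of_tendsto hconv).symm⟩
  rw [hx.iterate_Papp_sub hadd hpos]
  exact (inDP_sub_and_Papp_sub hadd hpos (hx.iterate hadd hpos k).1 (hx.iterate hadd hpos (k + 1)).1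
    (hx.iterate_succ_le hadd hpos k)).1

theorem Superharmonic.iterate_le_iterate (hadd : AdditiveOnFinSupp P₀)
    (hpos : PositiveOnFinSupp P₀) {x z : MP I n} (hx : Superharmonic P₀ x)
    (hz : Superharmonic P₀ z) (hxz : x ≤ z) (k : ℕ) : (Papp P₀)^[k] x ≤ (Papp P₀)^[k] z := by
  induction k with
  | zero => exact hxz
  | succ k ih =>
    rw [Function.iterate_succ_apply', Function.iterate_succ_apply']
    exact (inDP_and_Papp_le_of_le hadd hpos (hx.iterate hadd hpos k).1.nonneg ih
      (hz.iterate hadd hpos k).1).2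

theorem Superharmonic.tendsto_iterate_of_le (hadd : AdditiveOnFinSupp P₀)
    (hpos : PositiveOnFinSupp P₀) {x z : MP I n} (hx : Superharmonic P₀ x)
    (hz : Superharmonic P₀ z) (hxz : x ≤ z)
    (hz0 : Tendsto (fun k => (Papp P₀)^[k] z) atTop (𝓝 0)) :
    Tendsto (fun k => (Papp P₀)^[k] x) atTop (𝓝 0) := by
  have hnonneg (k : ℕ) : 0 ≤ (Papp P₀)^[k] x := (hx.iterate hadd hpos k).1.nonneg
  have hanti : Antitone fun k => (Papp P₀)^[k] x :=
    antitone_nat_of_succ_le (hx.iterate_succ_le hadd hpos)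
  obtain ⟨a, ha⟩ := hanti.exists_tendsto_atTop_of_ge hnonneg
  obtain rfl : a = 0 := le_antisymm
    (le_of_tendsto_of_tendsto' ha hz0 (hx.iterate_le_iterate hadd hpos hz hxz))
    (ge_of_tendsto' ha hnonneg)
  exact ha

/-- Lemma 2.9: potentials and superharmonic elements.
(i) If `x ≥ 0` lies in `D(G)`, then `G x ∈ D(P)` and `P (G x) = G x − x`; in particular every
potential is superharmonic.
(ii) A superharmonic element `x` is a potential iff `Pⁿ x → 0` in the product topology; in
particular any superharmonic element majorized by a potential is itself a potential. -/
theorem potential_superharmonic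
    {I : Type*} {n : I → ℕ} (P₀ : MP I n → MP I n)
    (hadd : ∀ x y : MP I n, FinSupp x → FinSupp y → P₀ (x + y) = P₀ x + P₀ y)
    (hsmul : ∀ (c : ℂ) (x : MP I n), FinSupp x → P₀ (c • x) = c • P₀ x)
    (hpos : ∀ x : MP I n, FinSupp x → MPos x → MPos (P₀ x)) :
    (∀ x : MP I n, InDG P₀ x →
      InDP P₀ (Gval P₀ x) ∧ Papp P₀ (Gval P₀ x) = Gval P₀ x - x) ∧
    (∀ x : MP I n, IsPotential P₀ x → Superharmonic P₀ x) ∧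
    (∀ x : MP I n, Superharmonic P₀ x →
      (IsPotential P₀ x ↔ Tendsto (fun k : ℕ => (Papp P₀)^[k] x) atTop (nhds 0))) ∧
    (∀ x z : MP I n, Superharmonic P₀ x → IsPotential P₀ z → MPle x z →
      IsPotential P₀ x) := by
  have hpos' : PositiveOnFinSupp P₀ := fun x hx hx0 =>
    mpos_iff_nonneg.1 (hpos x hx (mpos_iff_nonneg.2 hx0))
  refine ⟨fun x hx => ⟨(hx.inDP_Gval_and_Papp_le hadd hsmul hpos').1,
      hx.Papp_Gval hadd hsmul hpos'⟩,
    fun x hx => hx.superharmonic hadd hsmul hpos',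
    fun x hx => ⟨fun h => h.tendsto_iterate hadd hsmul hpos',
      hx.isPotential_of_tendsto hadd hpos'⟩,
    fun x z hx hz hxz => hx.isPotential_of_tendsto hadd hpos' ?_⟩
  exact hx.tendsto_iterate_of_le hadd hpos' (hz.superharmonic hadd hsmul hpos') hxz
    (hz.tendsto_iterate hadd hsmul hpos')

end MartinMP
end
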